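/- arXiv:2605.15603 — 2 statements merged into one kernel-verified Lean document; each statement's English description precedes it below -/
import Mathlib

section
/- Let S be a type, P : S → S → ℝ a stochastic matrix, c : S → ℝ bounded, γ ∈ (0,1), and ν a sub-probability measure on the positive integers. Then the value function Q^π is a fixed point of the ν-Bellman operator: (T^ν Q^π)(x) = Q^π(x) for every x ∈ S. -/
/-- `ξ^ν(k) = γ^(k−1) − ∑_{κ=0}^{k−1} γ^κ · ν(k−κ)`. -/
noncomputable def xiNu (γ : ℝ) (ν : ℕ → ℝ) (k : ℕ) : ℝ :=
  γ ^ (k - 1) - ∑ κ ∈ Finset.range k, γ ^ κ * ν (k - κ)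

/-- A sub-probability measure on the positive integers. -/
def IsSubProbPNat (ν : ℕ → ℝ) : Prop :=
  ν 0 = 0 ∧ (∀ k, 0 ≤ ν k) ∧ Summable ν ∧ ∑' k, ν k ≤ 1

/-!
Write `m n x = ∑ y, P^n x y * c y`; each `P^n` is stochastic, so `m` is bounded by a bound of
`c`. Then `Q^π = ∑ γ^n m n` and, by Chapman–Kolmogorov, `P^(k+1) Q^π = ∑ j, γ^j m (k+1+j)`.
Regrouping the `ν`-part of `T^ν Q^π` by total delay `n = k + j` (a Cauchy rearrangement,
absolutely convergent because `m` is bounded, `ν` summable and `|γ| < 1`) puts the coefficient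
`∑_{a+b=n} ν(a+1) γ^b` in front of `m (n+1)`, which is exactly what `ξ^ν(n+1)` subtracts from
`γ^n`. So the bracket sums to `∑ n, γ^n m (n+1)`, and `c + γ ∑ n, γ^n m (n+1) = Q^π`.
-/
open Finset

section Rearrangement

variable {α β : Type*}

theorem summable_prod_mul_of_abs_le {w : α → ℝ} {g h : α → β → ℝ} {M : ℝ}
    (hw : Summable w) (hh : ∀ i, Summable (h i)) (hM : ∀ i, ∑' j, h i j ≤ M)
    (hg : ∀ i j, |g i j| ≤ h i j) : Summable fun p : α × β => w p.1 * g p.1 p.2 := by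
  have hh_nonneg : ∀ i j, 0 ≤ h i j := fun i j => (abs_nonneg _).trans (hg i j)
  have hdom : Summable fun p : α × β => |w p.1| * h p.1 p.2 := by
    refine (summable_prod_of_nonneg fun p => mul_nonneg (abs_nonneg _) (hh_nonneg _ _)).2
      ⟨fun i => (hh i).mul_left |w i|, ?_⟩
    refine (hw.abs.mul_right M).of_nonneg_of_le
      (fun i => tsum_nonneg fun j => mul_nonneg (abs_nonneg _) (hh_nonneg i j)) fun i => ?_
    rw [show ∑' j, |w i| * h i j = |w i| * ∑' j, h i j from tsum_mul_left]
    exact mul_le_mul_of_nonneg_left (hM i) (abs_nonneg _)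
  refine hdom.of_norm_bounded fun p => ?_
  rw [Real.norm_eq_abs, abs_mul]
  exact mul_le_mul_of_nonneg_left (hg _ _) (abs_nonneg _)

theorem tsum_mul_tsum_comm {w : α → ℝ} {g h : α → β → ℝ} {M : ℝ}
    (hw : Summable w) (hh : ∀ i, Summable (h i)) (hM : ∀ i, ∑' j, h i j ≤ M)
    (hg : ∀ i j, |g i j| ≤ h i j) :
    ∑' i, w i * ∑' j, g i j = ∑' j, ∑' i, w i * g i j := by
  simp_rw [← tsum_mul_left]
  exact ((summable_prod_mul_of_abs_le hw hh hM hg).tsum_comm).symm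

theorem hasSum_sum_antidiagonal {A M : Type*} [AddCommMonoid A] [HasAntidiagonal A]
    [AddCommMonoid M] [TopologicalSpace M] [ContinuousAdd M] [RegularSpace M]
    {f : A × A → M} (hf : Summable f) :
    HasSum (fun n => ∑ p ∈ antidiagonal n, f p) (∑' p, f p) := by
  rw [← HasAntidiagonal.sigmaAntidiagonalEquivProd.tsum_eq]
  refine ((HasAntidiagonal.sigmaAntidiagonalEquivProd.summable_iff.2 hf).hasSum.sigma
    fun n => ?_)
  rw [← Finset.sum_coe_sort]
  exact hasSum_fintype _

end Rearrangement

section Discounting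

variable {γ : ℝ}

theorem abs_pow_mul_le {b C : ℝ} (hb : |b| ≤ C) (n : ℕ) : |γ ^ n * b| ≤ |γ| ^ n * C := by
  rw [abs_mul, abs_pow]
  exact mul_le_mul_of_nonneg_left hb (pow_nonneg (abs_nonneg γ) n)

theorem summable_abs_pow_mul (hγ : |γ| < 1) (C : ℝ) : Summable fun n => |γ| ^ n * C :=
  (summable_geometric_of_lt_one (abs_nonneg γ) hγ).mul_right C

theorem summable_pow_mul_of_abs_le {a : ℕ → ℝ} {C : ℝ} (hγ : |γ| < 1)
    (ha : ∀ n, |a n| ≤ C) :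
    Summable fun n => γ ^ n * a n :=
  (summable_abs_pow_mul hγ C).of_norm_bounded fun n => abs_pow_mul_le (ha n) n

theorem xiNu_succ_add_sum_antidiagonal (γ : ℝ) (ν : ℕ → ℝ) (n : ℕ) :
    xiNu γ ν (n + 1) + ∑ p ∈ antidiagonal n, ν (p.1 + 1) * γ ^ p.2 = γ ^ n := by
  have h_reindex : ∑ p ∈ antidiagonal n, ν (p.1 + 1) * γ ^ p.2 =
      ∑ κ ∈ range (n + 1), γ ^ κ * ν (n + 1 - κ) := by
    rw [← Nat.sum_antidiagonal_swap]
    simp only [Prod.fst_swap, Prod.snd_swap]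
    rw [Nat.sum_antidiagonal_eq_sum_range_succ (fun i j => ν (j + 1) * γ ^ i)]
    refine sum_congr rfl fun κ hκ => ?_
    rw [mul_comm, Nat.sub_add_comm (Nat.lt_succ_iff.1 (mem_range.1 hκ))]
  rw [xiNu, h_reindex, Nat.add_sub_cancel, sub_add_cancel]

theorem summable_nu_mul_pow_mul {ν m : ℕ → ℝ} {C : ℝ} (hγ : |γ| < 1) (hν : Summable ν)
    (hm : ∀ n, |m n| ≤ C) :
    Summable fun p : ℕ × ℕ => ν (p.1 + 1) * (γ ^ p.2 * m (p.1 + 1 + p.2)) :=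
  summable_prod_mul_of_abs_le (g := fun k j => γ ^ j * m (k + 1 + j))
    (h := fun _ j => |γ| ^ j * C) ((summable_nat_add_iff 1).2 hν)
    (fun _ => summable_abs_pow_mul hγ C) (fun _ => le_rfl)
    (fun _ j => abs_pow_mul_le (hm _) j)

theorem hasSum_sum_antidiagonal_mul {ν m : ℕ → ℝ} {C : ℝ} (hγ : |γ| < 1) (hν : Summable ν)
    (hm : ∀ n, |m n| ≤ C) :
    HasSum (fun n => (∑ p ∈ antidiagonal n, ν (p.1 + 1) * γ ^ p.2) * m (n + 1))
      (∑' k, ν (k + 1) * ∑' j, γ ^ j * m (k + 1 + j)) := by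
  have hF := summable_nu_mul_pow_mul hγ hν hm
  simp_rw [← tsum_mul_left (a := ν _), ← hF.tsum_prod]
  refine (hasSum_sum_antidiagonal hF).congr_fun fun n => ?_
  rw [sum_mul]
  refine sum_congr rfl fun p hp => ?_
  rw [← mem_antidiagonal.1 hp, add_right_comm]
  ring

theorem nuBellman_tsum_pow_mul {ν m : ℕ → ℝ} {C : ℝ} (hγ : |γ| < 1) (hν : Summable ν)
    (hm : ∀ n, |m n| ≤ C) :
    m 0 + γ * ∑' k, (xiNu γ ν (k + 1) * m (k + 1) + ν (k + 1) * ∑' j, γ ^ j * m (k + 1 + j)) =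
      ∑' k, γ ^ k * m k := by
  have h_rows : Summable fun k => ν (k + 1) * ∑' j, γ ^ j * m (k + 1 + j) := by
    simpa only [tsum_mul_left] using (summable_nu_mul_pow_mul hγ hν hm).prod
  have h_diag := hasSum_sum_antidiagonal_mul hγ hν hm
  have h_shift := (summable_pow_mul_of_abs_le hγ fun n => hm (n + 1)).hasSum
  have h_xi : HasSum (fun n => xiNu γ ν (n + 1) * m (n + 1))
      (∑' n, γ ^ n * m (n + 1) - ∑' k, ν (k + 1) * ∑' j, γ ^ j * m (k + 1 + j)) := by
    refine (h_shift.sub h_diag).congr_fun fun n => ?_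
    rw [← xiNu_succ_add_sum_antidiagonal γ ν n]
    ring
  rw [(h_xi.add h_rows.hasSum).tsum_eq, sub_add_cancel,
    (summable_pow_mul_of_abs_le hγ hm).tsum_eq_zero_add, pow_zero, one_mul, ← tsum_mul_left]
  simp only [pow_succ, mul_assoc, mul_left_comm γ]

end Discounting

section Kernel

variable {S : Type*}

structure IsStochastic (K : S → S → ℝ) : Prop where
  nonneg : ∀ x y, 0 ≤ K x y
  summable : ∀ x, Summable (K x)
  tsum_eq_one : ∀ x, ∑' y, K x y = 1

namespace IsStochastic

variable {K P : S → S → ℝ} {f : S → ℝ} {B : ℝ}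

theorem abs_mul_le (hK : IsStochastic K) (hf : ∀ y, |f y| ≤ B) (x y : S) :
    |K x y * f y| ≤ K x y * B := by
  rw [abs_mul, abs_of_nonneg (hK.nonneg x y)]
  exact mul_le_mul_of_nonneg_left (hf y) (hK.nonneg x y)

theorem tsum_mul_const (hK : IsStochastic K) (x : S) (B : ℝ) : ∑' y, K x y * B = B := by
  rw [tsum_mul_right, hK.tsum_eq_one, one_mul]

theorem abs_tsum_mul_le (hK : IsStochastic K) (hf : ∀ y, |f y| ≤ B) (x : S) :
    |∑' y, K x y * f y| ≤ B := by
  simpa only [hK.tsum_mul_const, Real.norm_eq_abs] using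
    tsum_of_norm_bounded (f := fun y => K x y * f y) ((hK.summable x).mul_right B).hasSum
      (hK.abs_mul_le hf x)

theorem tsum_comp_mul (hK : IsStochastic K) (hf : ∀ y, |f y| ≤ B) {w : S → ℝ}
    (hw : Summable w) :
    ∑' y, (∑' z, w z * K z y) * f y = ∑' z, w z * ∑' y, K z y * f y := by
  rw [tsum_mul_tsum_comm hw (fun z => (hK.summable z).mul_right B)
    (fun z => (hK.tsum_mul_const z B).le) (hK.abs_mul_le hf)]
  simp_rw [← tsum_mul_right, mul_assoc]

theorem comp (hP : IsStochastic P) (hK : IsStochastic K) :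
    IsStochastic fun x y => ∑' z, P x z * K z y where
  nonneg x y := tsum_nonneg fun z => mul_nonneg (hP.nonneg x z) (hK.nonneg z y)
  summable x := by
    have hK_abs (z y : S) : |K z y| ≤ K z y := (abs_of_nonneg (hK.nonneg z y)).le
    exact (summable_prod_mul_of_abs_le (hP.summable x) hK.summable
      (fun z => (hK.tsum_eq_one z).le) hK_abs).prod_symm.prod
  tsum_eq_one x := by
    simpa only [mul_one, hK.tsum_eq_one, hP.tsum_eq_one x] using
      (hK.tsum_comp_mul (f := fun _ => 1) (B := 1) (fun _ => by simp) (hP.summable x))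

end IsStochastic

end Kernel

section KernelPow

variable {S : Type*} [DecidableEq S]

noncomputable def kernelPow (P : S → S → ℝ) : ℕ → S → S → ℝ
  | 0 => fun x y => if x = y then 1 else 0
  | k + 1 => fun x y => ∑' z, P x z * kernelPow P k z y

variable {P : S → S → ℝ}

theorem eq_kernelPow {Pk : ℕ → S → S → ℝ}
    (h_zero : ∀ x y, Pk 0 x y = if x = y then 1 else 0)
    (h_succ : ∀ k x y, Pk (k + 1) x y = ∑' z, P x z * Pk k z y) : Pk = kernelPow P := by
  funext k
  induction k with
  | zero => funext x y; exact h_zero x y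
  | succ k ih => funext x y; rw [h_succ, ih, kernelPow]

theorem tsum_kernelPow_zero_mul (f : S → ℝ) (x : S) : ∑' y, kernelPow P 0 x y * f y = f x := by
  simp only [kernelPow, ite_mul, one_mul, zero_mul, eq_comm (a := x), tsum_ite_eq]

theorem isStochastic_kernelPow (hP : IsStochastic P) (k : ℕ) :
    IsStochastic (kernelPow P k) := by
  induction k with
  | zero =>
    have hasSum_one (x : S) : HasSum (kernelPow P 0 x) 1 := by
      simp only [kernelPow, eq_comm (a := x)]
      exact hasSum_ite_eq x 1
    refine ⟨fun x y => ?_, fun x => (hasSum_one x).summable, fun x => (hasSum_one x).tsum_eq⟩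
    simp only [kernelPow]
    split_ifs <;> norm_num
  | succ k ih => exact hP.comp ih

theorem tsum_kernelPow_mul_tsum (hP : IsStochastic P) {f : S → ℝ} {B : ℝ}
    (hf : ∀ y, |f y| ≤ B) (a b : ℕ) (x : S) :
    ∑' y, kernelPow P a x y * ∑' z, kernelPow P b y z * f z =
      ∑' z, kernelPow P (a + b) x z * f z := by
  induction a generalizing x with
  | zero => rw [tsum_kernelPow_zero_mul, zero_add]
  | succ a ih =>
    have hg := (isStochastic_kernelPow hP b).abs_tsum_mul_le hf
    rw [add_right_comm, kernelPow, kernelPow,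
      (isStochastic_kernelPow hP a).tsum_comp_mul hg (hP.summable x),
      (isStochastic_kernelPow hP (a + b)).tsum_comp_mul hf (hP.summable x)]
    simp_rw [ih]

theorem tsum_kernelPow_mul_tsum_pow (hP : IsStochastic P) {c : S → ℝ} {C : ℝ}
    (hc : ∀ y, |c y| ≤ C) {γ : ℝ} (hγ : |γ| < 1) (a : ℕ) (x : S) :
    ∑' y, kernelPow P a x y * ∑' k, γ ^ k * ∑' z, kernelPow P k y z * c z =
      ∑' k, γ ^ k * ∑' z, kernelPow P (a + k) x z * c z := by
  rw [tsum_mul_tsum_comm (h := fun _ k => |γ| ^ k * C) ((isStochastic_kernelPow hP a).summable x)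
    (fun _ => summable_abs_pow_mul hγ C) (fun _ => le_rfl)
    (fun y k => abs_pow_mul_le ((isStochastic_kernelPow hP k).abs_tsum_mul_le hc y) k)]
  refine tsum_congr fun k => ?_
  rw [← tsum_kernelPow_mul_tsum hP hc, ← tsum_mul_left]
  simp only [mul_left_comm]

end KernelPow

/-- The value function `Q^π` is a fixed point of the ν-Bellman operator. -/
theorem value_fixedPoint_nuBellman
    {S : Type*} [DecidableEq S] (P : S → S → ℝ)
    (hP_nonneg : ∀ x y, 0 ≤ P x y)
    (hP_summable : ∀ x, Summable (P x))
    (hP_sum : ∀ x, ∑' y, P x y = 1)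
    (Pk : ℕ → S → S → ℝ)
    (hPk_zero : ∀ x y, Pk 0 x y = if x = y then 1 else 0)
    (hPk_succ : ∀ k x y, Pk (k + 1) x y = ∑' z, P x z * Pk k z y)
    (c : S → ℝ) (hc : ∃ C, ∀ x, |c x| ≤ C)
    (γ : ℝ) (hγ : γ ∈ Set.Ioo (0 : ℝ) 1)
    (ν : ℕ → ℝ) (hν : IsSubProbPNat ν)
    (Qpi : S → ℝ)
    (hQpi : ∀ x, Qpi x = ∑' k : ℕ, γ ^ k * ∑' y, Pk k x y * c y)
    (T : (S → ℝ) → S → ℝ)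
    (hT : ∀ Q x, T Q x = c x + γ * ∑' k : ℕ,
      (xiNu γ ν (k + 1) * ∑' y, Pk (k + 1) x y * c y
        + ν (k + 1) * ∑' y, Pk (k + 1) x y * Q y)) :
    ∀ x, T Qpi x = Qpi x := by
  intro x
  have hP : IsStochastic P := ⟨hP_nonneg, hP_summable, hP_sum⟩
  obtain ⟨C, hC⟩ := hc
  have hγ_abs : |γ| < 1 := abs_lt.2 ⟨by linarith [hγ.1], hγ.2⟩
  obtain rfl := eq_kernelPow hPk_zero hPk_succ
  obtain rfl : Qpi = _ := funext hQpi
  rw [hT]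
  simp only [tsum_kernelPow_mul_tsum_pow hP hC hγ_abs]
  conv_lhs => rw [← tsum_kernelPow_zero_mul (P := P) c x]
  exact nuBellman_tsum_pow_mul hγ_abs hν.2.2.1
    fun n => (isStochastic_kernelPow hP n).abs_tsum_mul_le hC x
end

section
/- Let γ ∈ (0,1), let ν be a sub-probability measure on the positive integers, and let r : ℕ → ℝ be bounded. Then all of the following series converge absolutely and r(0) + γ·∑_{k≥1} ξ^ν(k)·r(k) + γ·∑_{i≥1} ν(i)·( ∑_{j≥0} γ^j·r(i+j) ) = ∑_{k≥0} γ^k·r(k). -/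
/-!
Writing `ν₊(i) = ν(i + 1)`, we have `ξ^ν(k + 1) = γ^k - (ν₊ ⋆ γ^·)(k)` with `⋆` the Cauchy product.
Since `ν₊` and `(γ^k)` are absolutely summable and `r` is bounded, the double series
`∑_{i,j} ν₊(i) γ^j r(i + j + 1)` converges absolutely; summing it by rows gives the third term and
summing it along antidiagonals gives `∑_k (ν₊ ⋆ γ^·)(k) r(k + 1)`, which cancels against the
convolution part of the second term. What is left is `r(0) + γ ∑_k γ^k r(k + 1) = ∑_k γ^k r(k)`.
-/

open Finset

theorem HasSum.sum_antidiagonal {α A : Type*} [AddCommMonoid α] [TopologicalSpace α]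
    [ContinuousAdd α] [RegularSpace α] [AddCommMonoid A] [HasAntidiagonal A]
    {F : A × A → α} {a : α} (h : HasSum F a) :
    HasSum (fun n => ∑ p ∈ antidiagonal n, F p) a :=
  (HasAntidiagonal.sigmaAntidiagonalEquivProd.hasSum_iff.2 h).sigma fun n =>
    (antidiagonal n).hasSum F

theorem Summable.mul_of_bounded {ι : Type*} {f r : ι → ℝ} {C : ℝ} (hf : Summable f)
    (hr : ∀ i, |r i| ≤ C) : Summable fun i => f i * r i :=
  .of_norm_bounded (hf.abs.mul_right C) fun i => by
    rw [Real.norm_eq_abs, abs_mul]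
    exact mul_le_mul_of_nonneg_left (hr i) (abs_nonneg _)

theorem hasSum_mul_tsum_mul_add {f g r : ℕ → ℝ} {C : ℝ} (hf : Summable f) (hg : Summable g)
    (hr : ∀ k, |r k| ≤ C) :
    HasSum (fun i => f i * ∑' j, g j * r (i + j))
      (∑' n, (∑ p ∈ antidiagonal n, f p.1 * g p.2) * r n) := by
  set F : ℕ × ℕ → ℝ := fun p => f p.1 * g p.2 * r (p.1 + p.2)
  have hF : Summable F :=
    (summable_mul_of_summable_norm (f := f) (g := g) hf.norm hg.norm).mul_of_bounded fun _ => hr _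
  have hrows : HasSum (fun i => f i * ∑' j, g j * r (i + j)) (∑' p, F p) := by
    convert hF.hasSum.prod_fiberwise fun i => (hF.prod_factor i).hasSum using 2 with i
    simp only [F, mul_assoc, tsum_mul_left]
  have hdiag : ∑' p, F p = ∑' n, (∑ p ∈ antidiagonal n, f p.1 * g p.2) * r n := by
    refine hF.hasSum.sum_antidiagonal.tsum_eq.symm.trans (tsum_congr fun n => ?_)
    rw [sum_mul]
    refine sum_congr rfl fun p hp => ?_
    rw [← mem_antidiagonal.1 hp]
  exact hdiag ▸ hrows

theorem xiNu_succ (γ : ℝ) (ν : ℕ → ℝ) (k : ℕ) :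
    xiNu γ ν (k + 1) = γ ^ k - ∑ p ∈ antidiagonal k, ν (p.1 + 1) * γ ^ p.2 := by
  rw [xiNu, Nat.add_sub_cancel, ← Nat.sum_antidiagonal_swap,
    Nat.sum_antidiagonal_eq_sum_range_succ_mk]
  congr 1
  refine sum_congr rfl fun i hi => ?_
  rw [mul_comm, Prod.swap_prod_mk, Nat.sub_add_comm (mem_range_succ_iff.1 hi)]

/-- `r(0) + γ ∑_{k≥1} ξ^ν(k) r(k) + γ ∑_{i≥1} ν(i) ∑_{j≥0} γ^j r(i+j)
  = ∑_{k≥0} γ^k r(k)`, all series converging absolutely. -/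
theorem nuBellman_reward_decomposition
    (γ : ℝ) (hγ : γ ∈ Set.Ioo (0 : ℝ) 1)
    (ν : ℕ → ℝ) (hν : IsSubProbPNat ν)
    (r : ℕ → ℝ) (hr : ∃ C, ∀ k, |r k| ≤ C) :
    Summable (fun k : ℕ => |xiNu γ ν (k + 1) * r (k + 1)|) ∧
    (∀ i : ℕ, Summable (fun j : ℕ => |γ ^ j * r (i + 1 + j)|)) ∧
    Summable (fun i : ℕ => |ν (i + 1) * ∑' j : ℕ, γ ^ j * r (i + 1 + j)|) ∧
    Summable (fun k : ℕ => |γ ^ k * r k|) ∧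
    r 0 + γ * (∑' k : ℕ, xiNu γ ν (k + 1) * r (k + 1))
        + γ * (∑' i : ℕ, ν (i + 1) * ∑' j : ℕ, γ ^ j * r (i + 1 + j))
      = ∑' k : ℕ, γ ^ k * r k := by
  obtain ⟨C, hC⟩ := hr
  have hC' : ∀ k, |r (k + 1)| ≤ C := fun k => hC _
  have hgeo : Summable (γ ^ ·) := summable_geometric_of_lt_one hγ.1.le hγ.2
  have hν' : Summable fun i => ν (i + 1) := (summable_nat_add_iff 1).2 hν.2.2.1
  set conv := fun k => ∑ p ∈ antidiagonal k, ν (p.1 + 1) * γ ^ p.2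
  have hconv : Summable conv :=
    (summable_norm_sum_mul_antidiagonal_of_summable_norm hν'.norm hgeo.norm).of_norm
  have hkey := hasSum_mul_tsum_mul_add hν' hgeo hC'
  simp only [Nat.add_right_comm _ _ 1] at hkey
  have hsplit : ∑' k, γ ^ k * r k = r 0 + γ * ∑' k, γ ^ k * r (k + 1) := by
    rw [(hgeo.mul_of_bounded hC).tsum_eq_zero_add, ← tsum_mul_left]
    simp only [pow_succ', pow_zero, one_mul, mul_assoc]
  have hxi : ∑' k, xiNu γ ν (k + 1) * r (k + 1)
      = ∑' k, γ ^ k * r (k + 1) - ∑' k, conv k * r (k + 1) := by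
    simp only [xiNu_succ, sub_mul]
    exact (hgeo.mul_of_bounded hC').tsum_sub (hconv.mul_of_bounded hC')
  refine ⟨?_, fun i => (hgeo.mul_of_bounded fun j => hC (i + 1 + j)).abs, hkey.summable.abs,
    (hgeo.mul_of_bounded hC).abs, ?_⟩
  · simpa only [xiNu_succ] using ((hgeo.sub hconv).mul_of_bounded hC').abs
  · rw [hsplit, hxi, hkey.tsum_eq]
    ring
end
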